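/- For every x ∈ (0, 1), G(x) = inf{ y ∈ [0, 1] : AT_o(x, y) ≤ AT_e(y, x) }, where G(x) = x for x ∈ [e^{−e}, 1) and, for x ∈ (0, e^{−e}), G(x) = exp(w · exp(−1/w)) with w the unique element of (−1, 0) satisfying w·e^w = 1/ln x. -/

import Mathlib

/-- Alternating towers: `AT 0 (x, y) = 1`, `AT n (x, y) = x ^ AT (n-1) (y, x)`. -/
noncomputable def altTower (x y : ℝ) : ℕ → ℝ
  | 0 => 1
  | n + 1 => x ^ altTower y x n

/-- `AT_e (x, y)`, the limit of the nonincreasing sequence `AT (2n) (x, y)`. -/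
noncomputable def ATe (x y : ℝ) : ℝ := ⨅ n : ℕ, altTower x y (2 * n)

/-- `AT_o (x, y)`, the limit of the nondecreasing sequence `AT (2n+1) (x, y)`. -/
noncomputable def ATo (x y : ℝ) : ℝ := ⨆ n : ℕ, altTower x y (2 * n + 1)

/-!
For `y ∈ (0, 1]` the even towers `AT_{2n}(y, x)` decrease to a fixed point `E` of
`s ↦ y ^ x ^ s`, and `x ^ E ≤ AT_o(x, y)`; conversely a fixed point `t ≤ 1` of that map bounds
every `AT_{2n}(y, x)` from below. So, writing `φ(t) = log t / x ^ t` (the log of the base having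
`t` as fixed point), the infimum of the set is `exp (min φ)` over the `t ≤ 1` with `x ^ t ≤ t`,
an interval `[t₀, 1]` with `x ^ t₀ = t₀`. The derivative of `φ` has the sign of
`1 - log x · t log t`. If `log x ≥ -e` this is nonnegative because `t log t ≥ -1/e`, so the minimum
is `φ(t₀) = log x`. Otherwise `φ` is minimal where `log x · t log t = 1`, i.e. at `t = e^w`, with
value `w e^{-1/w}`.
-/

open Real Set Filter Topology

section Tower

variable {x y : ℝ}

lemma altTower_mem_Icc (hx : x ∈ Icc (0 : ℝ) 1) (hy : y ∈ Icc (0 : ℝ) 1) (n : ℕ) :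
    altTower x y n ∈ Icc (0 : ℝ) 1 := by
  induction n generalizing x y with
  | zero => simp [altTower]
  | succ n ih => exact ⟨rpow_nonneg hx.1 _, rpow_le_one hx.1 hx.2 (ih hy hx).1⟩

lemma bddAbove_range_altTower (hx : x ∈ Icc (0 : ℝ) 1) (hy : y ∈ Icc (0 : ℝ) 1)
    (f : ℕ → ℕ) : BddAbove (range fun n => altTower x y (f n)) :=
  ⟨1, by rintro _ ⟨n, rfl⟩; exact (altTower_mem_Icc hx hy _).2⟩

lemma bddBelow_range_altTower (hx : x ∈ Icc (0 : ℝ) 1) (hy : y ∈ Icc (0 : ℝ) 1)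
    (f : ℕ → ℕ) : BddBelow (range fun n => altTower x y (f n)) :=
  ⟨0, by rintro _ ⟨n, rfl⟩; exact (altTower_mem_Icc hx hy _).1⟩

lemma monotone_rpow_rpow (hx0 : 0 < x) (hx1 : x ≤ 1) (hy0 : 0 < y) (hy1 : y ≤ 1) :
    Monotone fun t : ℝ => x ^ y ^ t := fun _ _ h =>
  rpow_le_rpow_of_exponent_ge hx0 hx1 (rpow_le_rpow_of_exponent_ge hy0 hy1 h)

lemma continuous_rpow_rpow (hx0 : 0 < x) (hy0 : 0 < y) : Continuous fun t : ℝ => x ^ y ^ t :=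
  (continuous_const_rpow hx0.ne').comp (continuous_const_rpow hy0.ne')

lemma antitone_altTower_two_mul (hx0 : 0 < x) (hx1 : x ≤ 1) (hy0 : 0 < y) (hy1 : y ≤ 1) :
    Antitone fun n => altTower x y (2 * n) := by
  refine antitone_nat_of_succ_le fun n => ?_
  induction n with
  | zero => exact (altTower_mem_Icc ⟨hx0.le, hx1⟩ ⟨hy0.le, hy1⟩ 2).2
  | succ n ih => exact monotone_rpow_rpow hx0 hx1 hy0 hy1 ih

lemma tendsto_altTower_two_mul (hx0 : 0 < x) (hx1 : x ≤ 1) (hy0 : 0 < y) (hy1 : y ≤ 1) :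
    Tendsto (fun n => altTower x y (2 * n)) atTop (𝓝 (ATe x y)) :=
  tendsto_atTop_ciInf (antitone_altTower_two_mul hx0 hx1 hy0 hy1)
    (bddBelow_range_altTower ⟨hx0.le, hx1⟩ ⟨hy0.le, hy1⟩ _)

lemma ATe_eq_rpow_rpow (hx0 : 0 < x) (hx1 : x ≤ 1) (hy0 : 0 < y) (hy1 : y ≤ 1) :
    ATe x y = x ^ y ^ ATe x y := by
  have hlim := tendsto_altTower_two_mul hx0 hx1 hy0 hy1
  exact tendsto_nhds_unique (hlim.comp (tendsto_add_atTop_nat 1))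
    (((continuous_rpow_rpow hx0 hy0).tendsto _).comp hlim)

lemma rpow_ATe_le_ATo (hx0 : 0 < x) (hx1 : x ≤ 1) (hy0 : 0 < y) (hy1 : y ≤ 1) :
    x ^ ATe y x ≤ ATo x y :=
  le_of_tendsto' (((continuous_const_rpow hx0.ne').tendsto _).comp
    (tendsto_altTower_two_mul hy0 hy1 hx0 hx1))
    (le_ciSup (bddAbove_range_altTower ⟨hx0.le, hx1⟩ ⟨hy0.le, hy1⟩ (fun n => 2 * n + 1)))

lemma le_altTower_two_mul_of_rpow_rpow_eq {t : ℝ} (hx0 : 0 < x) (hx1 : x ≤ 1) (hy0 : 0 < y)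
    (hy1 : y ≤ 1) (hfix : y ^ x ^ t = t) (ht : t ≤ 1) : ∀ n, t ≤ altTower y x (2 * n)
  | 0 => ht
  | n + 1 => hfix ▸ monotone_rpow_rpow hy0 hy1 hx0 hx1
      (le_altTower_two_mul_of_rpow_rpow_eq hx0 hx1 hy0 hy1 hfix ht n)

lemma ATo_le_ATe_of_rpow_rpow_eq {t : ℝ} (hx0 : 0 < x) (hx1 : x ≤ 1) (hy0 : 0 < y)
    (hy1 : y ≤ 1) (hfix : y ^ x ^ t = t) (ht : t ≤ 1) (hxt : x ^ t ≤ t) : ATo x y ≤ ATe y x := by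
  have hle := le_altTower_two_mul_of_rpow_rpow_eq hx0 hx1 hy0 hy1 hfix ht
  calc ATo x y ≤ x ^ t := ciSup_le fun n => rpow_le_rpow_of_exponent_ge hx0 hx1 (hle n)
    _ ≤ t := hxt
    _ ≤ ATe y x := le_ciInf hle

lemma not_ATo_le_ATe_zero (hx0 : 0 < x) (hx1 : x ≤ 1) : ¬ ATo x 0 ≤ ATe 0 x := by
  have hx : x ∈ Icc (0 : ℝ) 1 := ⟨hx0.le, hx1⟩
  have h0 : (0 : ℝ) ∈ Icc (0 : ℝ) 1 := ⟨le_rfl, zero_le_one⟩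
  have hATo : x ≤ ATo x 0 := by
    simpa [altTower, ATo] using
      le_ciSup (bddAbove_range_altTower hx h0 (fun n => 2 * n + 1)) 0
  have hATe : ATe 0 x ≤ 0 := by
    simpa [altTower, ATe, zero_rpow hx0.ne'] using
      ciInf_le (bddBelow_range_altTower h0 hx (fun n => 2 * n)) 1
  linarith

end Tower

section BaseLog

variable {x t : ℝ}

/-- `exp (towerBaseLog x t)` is the base `y` for which `t` is a fixed point of `s ↦ y ^ x ^ s`. -/
noncomputable def towerBaseLog (x t : ℝ) : ℝ := log t / x ^ t

lemma exp_towerBaseLog_rpow_rpow (hx0 : 0 < x) (ht : 0 < t) :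
    exp (towerBaseLog x t) ^ x ^ t = t := by
  rw [← exp_mul, towerBaseLog, div_mul_cancel₀ _ (rpow_pos_of_pos hx0 t).ne', exp_log ht]

lemma towerBaseLog_eq_log_of_rpow_rpow_eq {y : ℝ} (hx0 : 0 < x) (hy0 : 0 < y)
    (hfix : y ^ x ^ t = t) : towerBaseLog x t = log y := by
  rw [towerBaseLog]
  nth_rw 1 [← hfix]
  rw [log_rpow hy0, mul_div_cancel_left₀ _ (rpow_pos_of_pos hx0 _).ne']

theorem isLeast_exp_towerBaseLog (hx0 : 0 < x) (hx1 : x ≤ 1) (ht1 : t ≤ 1) (hxt : x ^ t ≤ t)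
    (hmin : ∀ s ≤ 1, x ^ s ≤ s → towerBaseLog x t ≤ towerBaseLog x s) :
    IsLeast {y ∈ Icc (0 : ℝ) 1 | ATo x y ≤ ATe y x} (exp (towerBaseLog x t)) := by
  have ht0 : 0 < t := (rpow_pos_of_pos hx0 t).trans_le hxt
  have hc1 : exp (towerBaseLog x t) ≤ 1 := exp_le_one_iff.mpr <|
    div_nonpos_of_nonpos_of_nonneg (log_nonpos ht0.le ht1) (rpow_nonneg hx0.le _)
  refine ⟨⟨⟨(exp_pos _).le, hc1⟩, ATo_le_ATe_of_rpow_rpow_eq hx0 hx1 (exp_pos _) hc1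
    (exp_towerBaseLog_rpow_rpow hx0 ht0) ht1 hxt⟩, ?_⟩
  rintro y ⟨⟨hy0, hy1⟩, hy⟩
  obtain rfl | hy0 := hy0.eq_or_lt
  · exact absurd hy (not_ATo_le_ATe_zero hx0 hx1)
  set E := ATe y x
  have hE : E = y ^ x ^ E := ATe_eq_rpow_rpow hy0 hy1 hx0 hx1
  have hE1 : E ≤ 1 := by rw [hE]; exact rpow_le_one hy0.le hy1 (rpow_nonneg hx0.le _)
  calc exp (towerBaseLog x t)
      ≤ exp (towerBaseLog x E) :=
        exp_le_exp.mpr (hmin E hE1 ((rpow_ATe_le_ATo hx0 hx1 hy0 hy1).trans hy))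
    _ = y := by rw [towerBaseLog_eq_log_of_rpow_rpow_eq hx0 hy0 hE.symm, exp_log hy0]

lemma hasDerivAt_towerBaseLog (hx0 : 0 < x) (ht : 0 < t) :
    HasDerivAt (towerBaseLog x) ((1 - log x * (t * log t)) / (t * x ^ t)) t := by
  have hxt := (rpow_pos_of_pos hx0 t).ne'
  refine ((hasDerivAt_log ht.ne').div (hasStrictDerivAt_const_rpow hx0 t).hasDerivAt hxt
    |>.congr_deriv ?_)
  field_simp

lemma monotoneOn_towerBaseLog (hx0 : 0 < x) {a b : ℝ} (ha : 0 < a)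
    (h : ∀ t ∈ Ioo a b, log x * (t * log t) ≤ 1) : MonotoneOn (towerBaseLog x) (Icc a b) := by
  refine monotoneOn_of_hasDerivWithinAt_nonneg (convex_Icc a b)
    (f' := fun t => (1 - log x * (t * log t)) / (t * x ^ t))
    (fun t ht => (hasDerivAt_towerBaseLog hx0 (ha.trans_le ht.1)).continuousAt.continuousWithinAt)
    (fun t ht => ?_) (fun t ht => ?_) <;> rw [interior_Icc] at ht
  · exact (hasDerivAt_towerBaseLog hx0 (ha.trans ht.1)).hasDerivWithinAt
  · have := ha.trans ht.1
    exact div_nonneg (sub_nonneg.mpr (h t ht)) (by positivity)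

lemma antitoneOn_towerBaseLog (hx0 : 0 < x) {a b : ℝ} (ha : 0 < a)
    (h : ∀ t ∈ Ioo a b, 1 ≤ log x * (t * log t)) : AntitoneOn (towerBaseLog x) (Icc a b) := by
  refine antitoneOn_of_hasDerivWithinAt_nonpos (convex_Icc a b)
    (f' := fun t => (1 - log x * (t * log t)) / (t * x ^ t))
    (fun t ht => (hasDerivAt_towerBaseLog hx0 (ha.trans_le ht.1)).continuousAt.continuousWithinAt)
    (fun t ht => ?_) (fun t ht => ?_) <;> rw [interior_Icc] at ht
  · exact (hasDerivAt_towerBaseLog hx0 (ha.trans ht.1)).hasDerivWithinAt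
  · have := ha.trans ht.1
    exact div_nonpos_of_nonpos_of_nonneg (sub_nonpos.mpr (h t ht)) (by positivity)

end BaseLog

section Cases

variable {x : ℝ}

lemma exists_rpow_eq_self (hx0 : 0 < x) (hx1 : x ≤ 1) : ∃ t ≤ 1, x ^ t = t := by
  have hcont : ContinuousOn (fun t => x ^ t - t) (Icc 0 1) :=
    ((continuous_const_rpow hx0.ne').sub continuous_id).continuousOn
  obtain ⟨t, ht, hzero⟩ := intermediate_value_Icc' zero_le_one hcont
    (show (0 : ℝ) ∈ Icc (x ^ (1 : ℝ) - 1) (x ^ (0 : ℝ) - 0) by simp [hx1])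
  exact ⟨t, ht.2, sub_eq_zero.mp hzero⟩

lemma le_of_rpow_eq_self_of_rpow_le_self {t s : ℝ} (hx0 : 0 < x) (hx1 : x ≤ 1) (ht : x ^ t = t)
    (hs : x ^ s ≤ s) : t ≤ s := by
  by_contra! hst
  have := rpow_le_rpow_of_exponent_ge hx0 hx1 hst.le
  linarith

lemma neg_exp_neg_one_le_mul_log {t : ℝ} (ht : 0 ≤ t) : -exp (-1) ≤ t * log t := by
  have hmin : exp (-1) * log (exp (-1)) = -exp (-1) := by rw [log_exp]; ring
  rcases le_total t (exp (-1)) with h | h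
  · exact hmin ▸ mul_log_strictAntiOn.antitoneOn ⟨ht, h⟩ ⟨(exp_pos _).le, le_rfl⟩ h
  · exact hmin ▸ mul_log_strictMonoOn.monotoneOn (mem_Ici.mpr le_rfl) h h

theorem isLeast_of_exp_neg_exp_le (hx0 : 0 < x) (hx1 : x < 1) (hxe : exp (-exp 1) ≤ x) :
    IsLeast {y ∈ Icc (0 : ℝ) 1 | ATo x y ≤ ATe y x} x := by
  obtain ⟨t₀, ht₀1, ht₀⟩ := exists_rpow_eq_self hx0 hx1.le
  have ht₀0 : 0 < t₀ := ht₀ ▸ rpow_pos_of_pos hx0 t₀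
  have hlogx : -exp 1 ≤ log x := by simpa using log_le_log (exp_pos _) hxe
  have hlogx0 : log x < 0 := log_neg hx0 hx1
  have hexp : exp 1 * exp (-1) = 1 := by rw [← exp_add]; simp
  have hmono : MonotoneOn (towerBaseLog x) (Icc t₀ 1) :=
    monotoneOn_towerBaseLog hx0 ht₀0 fun t ht => by
      have h1 := neg_exp_neg_one_le_mul_log (ht₀0.trans ht.1).le
      have h2 := mul_log_nonpos (ht₀0.trans ht.1).le ht.2.le
      nlinarith
  have hbase : towerBaseLog x t₀ = log x :=
    towerBaseLog_eq_log_of_rpow_rpow_eq hx0 hx0 (by rw [ht₀, ht₀])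
  have h := isLeast_exp_towerBaseLog hx0 hx1.le ht₀1 ht₀.le fun s hs1 hs =>
    have hts := le_of_rpow_eq_self_of_rpow_le_self hx0 hx1.le ht₀ hs
    hmono ⟨le_rfl, ht₀1⟩ ⟨hts, hs1⟩ hts
  rwa [hbase, exp_log hx0] at h

theorem isLeast_of_mul_exp_eq_inv_log (hx0 : 0 < x) (hx1 : x < 1) {w : ℝ}
    (hw : w ∈ Ioo (-1 : ℝ) 0) (hweq : w * exp w = 1 / log x) :
    IsLeast {y ∈ Icc (0 : ℝ) 1 | ATo x y ≤ ATe y x} (exp (w * exp (-1 / w))) := by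
  obtain ⟨hw1, hw0⟩ := hw
  have hlogx0 : log x < 0 := log_neg hx0 hx1
  set t₂ := exp w
  have hlogx_t₂ : log x * t₂ = 1 / w := by
    rw [eq_div_iff hlogx0.ne] at hweq
    rw [eq_div_iff hw0.ne]
    linear_combination hweq
  have ht₂log : log x * (t₂ * log t₂) = 1 := by
    rw [log_exp, ← mul_assoc, hlogx_t₂, one_div_mul_cancel hw0.ne]
  have ht₂1 : t₂ ≤ 1 := exp_le_one_iff.mpr hw0.le
  have ht₂e : exp (-1) ≤ t₂ := exp_le_exp.mpr hw1.le
  have hadm : x ^ t₂ ≤ t₂ := by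
    rw [rpow_def_of_pos hx0, hlogx_t₂]
    refine exp_le_exp.mpr ((div_le_iff_of_neg hw0).mpr ?_)
    nlinarith
  have hbase : towerBaseLog x t₂ = w * exp (-1 / w) := by
    rw [towerBaseLog, log_exp, rpow_def_of_pos hx0, hlogx_t₂, div_eq_mul_inv, ← exp_neg,
      neg_div]
  have hmono : MonotoneOn (towerBaseLog x) (Icc t₂ 1) :=
    monotoneOn_towerBaseLog hx0 (exp_pos w) fun t ht => by
      have := mul_log_strictMonoOn.monotoneOn ht₂e (ht₂e.trans ht.1.le) ht.1.le
      nlinarith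
  have hanti (s : ℝ) (hs : x ^ s ≤ s) : AntitoneOn (towerBaseLog x) (Icc s t₂) :=
    antitoneOn_towerBaseLog hx0 ((rpow_pos_of_pos hx0 s).trans_le hs) fun t ht => by
      have ht0 : 0 < t := (rpow_pos_of_pos hx0 s).trans_le (hs.trans ht.1.le)
      rcases le_total t (exp (-1)) with hte | hte
      · have hxt : x ^ t ≤ t := (rpow_le_rpow_of_exponent_ge hx0 hx1.le ht.1.le).trans
          (hs.trans ht.1.le)
        have hadm_t : t * log x ≤ log t := by
          simpa [log_rpow hx0] using log_le_log (rpow_pos_of_pos hx0 t) hxt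
        have hlogt : log t ≤ -1 := by simpa using log_le_log ht0 hte
        -- `log x * (t * log t) ≥ (log t) ^ 2 ≥ 1`
        nlinarith
      · have := mul_log_strictMonoOn.monotoneOn hte ht₂e ht.2.le
        nlinarith
  rw [← hbase]
  refine isLeast_exp_towerBaseLog hx0 hx1.le ht₂1 hadm fun s hs1 hs => ?_
  rcases le_total s t₂ with h | h
  · exact hanti s hs ⟨le_rfl, h⟩ ⟨h, le_rfl⟩ h
  · exact hmono ⟨le_rfl, ht₂1⟩ ⟨h, hs1⟩ h

end Cases

theorem stmt_11 (x : ℝ) (hx : x ∈ Set.Ioo (0 : ℝ) 1) :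
    (Real.exp (-Real.exp 1) ≤ x →
      x = sInf {y ∈ Set.Icc (0 : ℝ) 1 | ATo x y ≤ ATe y x}) ∧
    (x < Real.exp (-Real.exp 1) →
      ∀ w ∈ Set.Ioo (-1 : ℝ) 0, w * Real.exp w = 1 / Real.log x →
        Real.exp (w * Real.exp (-1 / w)) =
          sInf {y ∈ Set.Icc (0 : ℝ) 1 | ATo x y ≤ ATe y x}) :=
  ⟨fun hxe => (isLeast_of_exp_neg_exp_le hx.1 hx.2 hxe).csInf_eq.symm,
    fun _ _ hw hweq => (isLeast_of_mul_exp_eq_inv_log hx.1 hx.2 hw hweq).csInf_eq.symm⟩
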